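/- arXiv:1301.6321 — 2 statements merged into one kernel-verified Lean document; each statement's English description precedes it below -/
import Mathlib

section
/- (Maximum principle for the optimal target problem.) Assume hypothesis (EC). Let τ ∈ [0,T) and 0 ≤ M < M^τ. Then u* is an optimal control to (OP)^{M,τ} if and only if u* ∈ U_{M,τ} and Re ∫_τ^T ⟨B φ*(t), u*(t)⟩ dt = max_{v ∈ U_{M,τ}} Re ∫_τ^T ⟨B φ*(t), v(t)⟩ dt, where the adjoint state is φ*(t) = U(t−T)(z_d − y(T;χ_{(τ,T)}u*,y₀)). -/
open MeasureTheory Set Filter Topology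

noncomputable section

variable {H : Type*} [NormedAddCommGroup H] [InnerProductSpace ℂ H] [CompleteSpace H]
  [SecondCountableTopology H]

/-- `U` is a strongly continuous one-parameter group of unitary operators on `H`,
abstracting the Schrödinger group `e^{-iΔt}`. -/
def IsUnitaryGroup (U : ℝ → H →L[ℂ] H) : Prop :=
  U 0 = ContinuousLinearMap.id ℂ H ∧
  (∀ s t : ℝ, U (s + t) = (U s).comp (U t)) ∧
  (∀ (t : ℝ) (x : H), ‖U t x‖ = ‖x‖) ∧
  ∀ x : H, Continuous fun t : ℝ => U t x

/-- `B` is a nonzero orthogonal projection on `H`, abstracting multiplication by `χ_ω`. -/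
def IsOrthProj (B : H →L[ℂ] H) : Prop :=
  B ≠ 0 ∧ B.comp B = B ∧ ∀ x y : H, (inner ℂ (B x) y : ℂ) = inner ℂ x (B y)

/-- Membership in `L∞((a,b);H)`. -/
def MemLinfty (u : ℝ → H) (a b : ℝ) : Prop :=
  AEStronglyMeasurable u (volume : Measure ℝ) ∧
    ∃ c : ℝ, ∀ᵐ t : ℝ ∂volume, t ∈ Ioo a b → ‖u t‖ ≤ c

/-- Membership in `L∞((0,∞);H)`. -/
def MemLinftyInf (u : ℝ → H) : Prop :=
  AEStronglyMeasurable u (volume : Measure ℝ) ∧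
    ∃ c : ℝ, ∀ᵐ t : ℝ ∂volume, t ∈ Ioi (0 : ℝ) → ‖u t‖ ≤ c

/-- The `L∞((a,b);H)` norm of `u`. -/
def supNorm (u : ℝ → H) (a b : ℝ) : ℝ :=
  sInf {c : ℝ | 0 ≤ c ∧ ∀ᵐ t : ℝ ∂volume, t ∈ Ioo a b → ‖u t‖ ≤ c}

/-- `stateT U B T τ u y₀ = y(T; χ_{(τ,T)}u, y₀)`, the mild solution at time `T` of the
controlled Schrödinger equation with initial state `y₀`, the control acting on `(τ,T)`:
`y(T) = U(T)y₀ + ∫_τ^T U(T-s) B u(s) ds`.  The free state at time `t` starting from `y₀`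
with control `u` active from time `0` is `stateT U B t 0 u y₀`. -/
def stateT (U : ℝ → H →L[ℂ] H) (B : H →L[ℂ] H) (T τ : ℝ) (u : ℝ → H) (y₀ : H) : H :=
  U T y₀ + ∫ s in Ioo τ T, U (T - s) (B (u s))

/-- Hypothesis (EC): `L∞`-exact controllability with cost. -/
def EC (U : ℝ → H →L[ℂ] H) (B : H →L[ℂ] H) : Prop :=
  ∀ τ : ℝ, 0 < τ → ∃ C : ℝ, 0 < C ∧ ∀ y₀ z : H, ∃ u : ℝ → H,
    AEStronglyMeasurable u (volume : Measure ℝ) ∧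
    (∀ᵐ t : ℝ ∂volume, t ∈ Ioo 0 τ → ‖u t‖ ≤ C * ‖z - U τ y₀‖) ∧
    stateT U B τ 0 u y₀ = z

/-- Hypothesis (UC): unique continuation. -/
def UC (U : ℝ → H →L[ℂ] H) (B : H →L[ℂ] H) : Prop :=
  ∀ η : H, η ≠ 0 → volume {t : ℝ | B (U t η) = 0} = 0

/-- The admissible set `U_M` of the minimal time problem `(TOCP)_M`. -/
def UMset (U : ℝ → H →L[ℂ] H) (B : H →L[ℂ] H) (y₀ : H) (M : ℝ) : Set (ℝ → H) :=
  {u | MemLinftyInf u ∧ (∀ᵐ t : ℝ ∂volume, t ∈ Ioi (0 : ℝ) → ‖u t‖ ≤ M) ∧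
    ∃ s : ℝ, 0 < s ∧ stateT U B s 0 u y₀ = 0}

/-- The minimal time `T_M` of `(TOCP)_M`. -/
def Tmin (U : ℝ → H →L[ℂ] H) (B : H →L[ℂ] H) (y₀ : H) (M : ℝ) : ℝ :=
  sInf {s : ℝ | 0 < s ∧ ∃ u ∈ UMset U B y₀ M, stateT U B s 0 u y₀ = 0}

/-- The admissible set `V_T` of the minimal norm problem `(NOCP)_T`. -/
def VTset (U : ℝ → H →L[ℂ] H) (B : H →L[ℂ] H) (y₀ : H) (T : ℝ) : Set (ℝ → H) :=
  {v | MemLinfty v 0 T ∧ stateT U B T 0 v y₀ = 0}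

/-- The minimal norm `M_T` of `(NOCP)_T`. -/
def Mmin (U : ℝ → H →L[ℂ] H) (B : H →L[ℂ] H) (y₀ : H) (T : ℝ) : ℝ :=
  sInf ((fun v : ℝ → H => supNorm v 0 T) '' VTset U B y₀ T)

/-- Hypothesis (BB): bang-bang property of the minimal time problems. -/
def BB (U : ℝ → H →L[ℂ] H) (B : H →L[ℂ] H) : Prop :=
  ∀ y₀ : H, y₀ ≠ 0 → ∀ M : ℝ, 0 < M → ∀ u ∈ UMset U B y₀ M,
    stateT U B (Tmin U B y₀ M) 0 u y₀ = 0 →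
    ∀ᵐ t : ℝ ∂volume, t ∈ Ioo 0 (Tmin U B y₀ M) → ‖u t‖ = M

/-- Hypothesis (ET): existence of optimal controls for the minimal time problems. -/
def ET (U : ℝ → H →L[ℂ] H) (B : H →L[ℂ] H) : Prop :=
  ∀ y₀ : H, y₀ ≠ 0 → ∀ M : ℝ, 0 < M →
    ∃ u ∈ UMset U B y₀ M, stateT U B (Tmin U B y₀ M) 0 u y₀ = 0

/-- The admissible set `U_{M,τ}`. -/
def UadmSet (M τ T : ℝ) : Set (ℝ → H) :=
  {u | MemLinfty u 0 T ∧ ∀ᵐ t : ℝ ∂volume, t ∈ Ioo τ T → ‖u t‖ ≤ M}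

/-- The optimal distance `r(M,τ)` of the optimal target problem `(OP)^{M,τ}`. -/
def rOP (U : ℝ → H →L[ℂ] H) (B : H →L[ℂ] H) (y₀ z_d : H) (T M τ : ℝ) : ℝ :=
  sInf ((fun u : ℝ → H => ‖stateT U B T τ u y₀ - z_d‖) '' UadmSet M τ T)

/-- `u` is an optimal control to `(OP)^{M,τ}`. -/
def IsOptOP (U : ℝ → H →L[ℂ] H) (B : H →L[ℂ] H) (y₀ z_d : H) (T M τ : ℝ) (u : ℝ → H) :
    Prop :=
  u ∈ UadmSet M τ T ∧ ‖stateT U B T τ u y₀ - z_d‖ = rOP U B y₀ z_d T M τ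

/-- `M^τ`, the minimal norm for exact steering to the target `z_d`. -/
def Mtau (U : ℝ → H →L[ℂ] H) (B : H →L[ℂ] H) (y₀ z_d : H) (T τ : ℝ) : ℝ :=
  sInf ((fun u : ℝ → H => supNorm u τ T) ''
    {u : ℝ → H | MemLinfty u 0 T ∧ stateT U B T τ u y₀ = z_d})

/-- The admissible set `W_{τ,r}` of the optimal norm problem `(NP)^{τ,r}`. -/
def WadmSet (U : ℝ → H →L[ℂ] H) (B : H →L[ℂ] H) (y₀ z_d : H) (T τ r : ℝ) :
    Set (ℝ → H) :=
  {u | MemLinfty u 0 T ∧ ‖stateT U B T τ u y₀ - z_d‖ ≤ r}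

/-- The optimal norm `M(τ,r)` of `(NP)^{τ,r}`. -/
def MNP (U : ℝ → H →L[ℂ] H) (B : H →L[ℂ] H) (y₀ z_d : H) (T τ r : ℝ) : ℝ :=
  sInf ((fun u : ℝ → H => supNorm u τ T) '' WadmSet U B y₀ z_d T τ r)

/-- `u` is an optimal control to `(NP)^{τ,r}`. -/
def IsOptNP (U : ℝ → H →L[ℂ] H) (B : H →L[ℂ] H) (y₀ z_d : H) (T τ r : ℝ) (u : ℝ → H) :
    Prop :=
  u ∈ WadmSet U B y₀ z_d T τ r ∧ supNorm u τ T = MNP U B y₀ z_d T τ r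

/-- The admissible set `V_{M,r}` of the second type optimal time problem `(TP)^{M,r}`. -/
def VadmSet (U : ℝ → H →L[ℂ] H) (B : H →L[ℂ] H) (y₀ z_d : H) (T M r : ℝ) :
    Set (ℝ → H) :=
  {u | ∃ τ : ℝ, τ ∈ Ico (0 : ℝ) T ∧ u ∈ UadmSet M τ T ∧
    ‖stateT U B T τ u y₀ - z_d‖ ≤ r}

/-- `τ_{M,r}(u)`. -/
def tauOf (U : ℝ → H →L[ℂ] H) (B : H →L[ℂ] H) (y₀ z_d : H) (T r : ℝ) (u : ℝ → H) : ℝ :=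
  sSup {τ : ℝ | τ ∈ Ico (0 : ℝ) T ∧ ‖stateT U B T τ u y₀ - z_d‖ ≤ r}

/-- The optimal time `τ(M,r)` of `(TP)^{M,r}`. -/
def tauTP (U : ℝ → H →L[ℂ] H) (B : H →L[ℂ] H) (y₀ z_d : H) (T M r : ℝ) : ℝ :=
  sSup (tauOf U B y₀ z_d T r '' VadmSet U B y₀ z_d T M r)

/-- `u` is an optimal control to `(TP)^{M,r}`. -/
def IsOptTP (U : ℝ → H →L[ℂ] H) (B : H →L[ℂ] H) (y₀ z_d : H) (T M r : ℝ) (u : ℝ → H) :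
    Prop :=
  u ∈ VadmSet U B y₀ z_d T M r ∧
    ‖stateT U B T (tauTP U B y₀ z_d T M r) u y₀ - z_d‖ ≤ r

/-- The adjoint state `φ*(t) = U(t-T)(z_d - y(T; χ_{(τ,T)}u, y₀))`. -/
def adjState (U : ℝ → H →L[ℂ] H) (B : H →L[ℂ] H) (y₀ z_d : H) (T τ : ℝ) (u : ℝ → H)
    (t : ℝ) : H :=
  U (t - T) (z_d - stateT U B T τ u y₀)


/-!
The reachable set `{y(T; χ_{(τ,T)}v, y₀) : v ∈ U_{M,τ}}` is convex, since the state depends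
affinely on the control, so `u` is optimal iff `y* := y(T; χ_{(τ,T)}u, y₀)` is the point of
that set nearest to `z_d`, i.e. iff `Re ⟪z_d - y*, y - y*⟫ ≤ 0` for every reachable `y`.
Because `U` is unitary and `B` self-adjoint,
`∫_τ^T ⟪B φ*(t), v(t)⟫ dt = ⟪z_d - y*, y(T; χ_{(τ,T)}v, y₀) - U(T)y₀⟫`,
which turns this variational inequality into the maximum principle.
-/

theorem isMinOn_iff_eq_csInf_image {α : Type*} {f : α → ℝ} {s : Set α} {a : α}
    (hf : BddBelow (f '' s)) (ha : a ∈ s) : IsMinOn f s a ↔ f a = sInf (f '' s) :=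
  ⟨fun h => ((h.isGLB ha).csInf_eq ⟨f a, mem_image_of_mem f ha⟩).symm,
    fun h => isMinOn_iff.mpr fun _ hx => h ▸ csInf_le hf (mem_image_of_mem f hx)⟩

theorem Convex.isMinOn_norm_sub_iff_re_inner_le_zero {E : Type*} [NormedAddCommGroup E]
    [InnerProductSpace ℂ E] {K : Set E} (hK : Convex ℝ K) {u v : E} (hv : v ∈ K) :
    IsMinOn (fun w => ‖u - w‖) K v ↔ ∀ w ∈ K, (inner ℂ (u - v) (w - v)).re ≤ 0 := by
  let _ : InnerProductSpace ℝ E := InnerProductSpace.rclikeToReal ℂ E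
  have hproj := norm_eq_iInf_iff_real_inner_le_zero hK (u := u) hv
  simp only [real_inner_eq_re_inner, RCLike.re_to_complex] at hproj
  rw [← hproj]
  have hbdd : BddBelow (range fun w : K => ‖u - w‖) :=
    ⟨0, by rintro _ ⟨w, rfl⟩; positivity⟩
  exact ⟨fun h => (h.iInf_eq hv).symm,
    fun h => isMinOn_iff.mpr fun w hw => h ▸ ciInf_le hbdd ⟨w, hw⟩⟩

theorem continuous_uncurry_of_isometry_of_continuous {X R E F : Type*} [TopologicalSpace X]
    [Ring R] [SeminormedAddCommGroup E] [SeminormedAddCommGroup F] [Module R E] [Module R F]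
    {U : X → E →L[R] F} (hnorm : ∀ t x, ‖U t x‖ = ‖x‖) (hcont : ∀ x, Continuous fun t => U t x) :
    Continuous fun p : X × E => U p.1 p.2 := by
  refine continuous_iff_continuousAt.mpr fun ⟨t₀, x₀⟩ => ?_
  rw [ContinuousAt, tendsto_iff_norm_sub_tendsto_zero]
  refine squeeze_zero (g := fun p : X × E => ‖p.2 - x₀‖ + ‖U p.1 x₀ - U t₀ x₀‖)
    (fun _ => norm_nonneg _) (fun p => ?_) ?_
  · calc ‖U p.1 p.2 - U t₀ x₀‖ = ‖U p.1 (p.2 - x₀) + (U p.1 x₀ - U t₀ x₀)‖ := by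
          rw [map_sub, sub_add_sub_cancel]
      _ ≤ ‖p.2 - x₀‖ + ‖U p.1 x₀ - U t₀ x₀‖ := by
          rw [← hnorm p.1 (p.2 - x₀)]; exact norm_add_le _ _
  · have hg : Continuous fun p : X × E => ‖p.2 - x₀‖ + ‖U p.1 x₀ - U t₀ x₀‖ := by fun_prop
    simpa using hg.tendsto (t₀, x₀)

section Control

variable {E : Type*} [NormedAddCommGroup E] [InnerProductSpace ℂ E] {U : ℝ → E →L[ℂ] E}

namespace IsUnitaryGroup

theorem inner_apply_left (hU : IsUnitaryGroup U) (s : ℝ) (a x : E) :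
    inner ℂ (U s a) x = inner ℂ a (U (-s) x) := by
  have hinv : U s (U (-s) x) = x := by
    rw [← ContinuousLinearMap.comp_apply, ← hU.2.1, add_neg_cancel, hU.1]; rfl
  conv_lhs => rw [← hinv]
  exact LinearIsometry.inner_map_map ⟨(U s).toLinearMap, hU.2.2.1 s⟩ a _

theorem continuous_uncurry (hU : IsUnitaryGroup U) : Continuous fun p : ℝ × E => U p.1 p.2 :=
  continuous_uncurry_of_isometry_of_continuous hU.2.2.1 hU.2.2.2

end IsUnitaryGroup

variable {B : E →L[ℂ] E} {T τ M : ℝ} {y₀ : E}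

theorem integrableOn_controlIntegrand (hU : IsUnitaryGroup U) {w : ℝ → E}
    (hw : w ∈ UadmSet M τ T) : IntegrableOn (fun s => U (T - s) (B (w s))) (Ioo τ T) := by
  have hmeas : AEStronglyMeasurable (fun s => U (T - s) (B (w s))) volume :=
    hU.continuous_uncurry.comp_aestronglyMeasurable
      ((continuous_const.sub continuous_id).aestronglyMeasurable.prodMk
        (B.continuous.comp_aestronglyMeasurable hw.1.1))
  refine Integrable.mono' (integrableOn_const (C := ‖B‖ * M) measure_Ioo_lt_top.ne)
    hmeas.restrict ?_
  rw [ae_restrict_iff' measurableSet_Ioo]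
  filter_upwards [hw.2] with t ht hmem
  rw [hU.2.2.1]
  exact (B.le_opNorm _).trans (mul_le_mul_of_nonneg_left (ht hmem) (norm_nonneg _))

theorem convex_UadmSet : Convex ℝ (UadmSet M τ T : Set (ℝ → E)) := by
  rintro v ⟨⟨hva, cv, hvc⟩, hvM⟩ w ⟨⟨hwa, cw, hwc⟩, hwM⟩ a b ha hb hab
  have hball {c : ℝ} {t : ℝ} (hvt : ‖v t‖ ≤ c) (hwt : ‖w t‖ ≤ c) : ‖(a • v + b • w) t‖ ≤ c := by
    simpa using convex_closedBall (0 : E) c (by simpa using hvt) (by simpa using hwt) ha hb hab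
  refine ⟨⟨(hva.const_smul a).add (hwa.const_smul b), max cv cw, ?_⟩, ?_⟩
  · filter_upwards [hvc, hwc] with t hvt hwt hmem
    exact hball ((hvt hmem).trans (le_max_left _ _)) ((hwt hmem).trans (le_max_right _ _))
  · filter_upwards [hvM, hwM] with t hvt hwt hmem
    exact hball (hvt hmem) (hwt hmem)

theorem stateT_smul_add_smul (hU : IsUnitaryGroup U) {v w : ℝ → E}
    (hv : v ∈ UadmSet M τ T) (hw : w ∈ UadmSet M τ T) {a b : ℝ} (hab : a + b = 1) :
    stateT U B T τ (a • v + b • w) y₀ = a • stateT U B T τ v y₀ + b • stateT U B T τ w y₀ := by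
  have hIv : IntegrableOn (fun s => a • U (T - s) (B (v s))) (Ioo τ T) :=
    (integrableOn_controlIntegrand hU hv).smul a
  have hIw : IntegrableOn (fun s => b • U (T - s) (B (w s))) (Ioo τ T) :=
    (integrableOn_controlIntegrand hU hw).smul b
  simp only [stateT, Pi.add_apply, Pi.smul_apply, map_add, ContinuousLinearMap.map_smul_of_tower]
  rw [integral_add hIv hIw, integral_smul, integral_smul, smul_add, smul_add,
    add_add_add_comm, ← add_smul, hab, one_smul]

theorem stateT_sub_free_evolution (w : ℝ → E) :
    stateT U B T τ w y₀ - U T y₀ = ∫ s in Ioo τ T, U (T - s) (B (w s)) :=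
  add_sub_cancel_left _ _

def reachableSet (U : ℝ → E →L[ℂ] E) (B : E →L[ℂ] E) (y₀ : E) (T M τ : ℝ) : Set E :=
  (fun w => stateT U B T τ w y₀) '' UadmSet M τ T

theorem convex_reachableSet (hU : IsUnitaryGroup U) : Convex ℝ (reachableSet U B y₀ T M τ) := by
  rintro _ ⟨v, hv, rfl⟩ _ ⟨w, hw, rfl⟩ a b ha hb hab
  exact ⟨a • v + b • w, convex_UadmSet hv hw ha hb hab, stateT_smul_add_smul hU hv hw hab⟩

theorem isOptOP_iff_isMinOn_reachableSet {z_d : E} {u : ℝ → E} (hu : u ∈ UadmSet M τ T) :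
    IsOptOP U B y₀ z_d T M τ u ↔
      IsMinOn (fun y => ‖z_d - y‖) (reachableSet U B y₀ T M τ) (stateT U B T τ u y₀) := by
  have hbdd : BddBelow ((fun w => ‖stateT U B T τ w y₀ - z_d‖) '' UadmSet M τ T) :=
    ⟨0, by rintro _ ⟨w, -, rfl⟩; positivity⟩
  rw [IsOptOP, rOP, ← isMinOn_iff_eq_csInf_image hbdd hu, reachableSet, isMinOn_iff,
    isMinOn_iff, forall_mem_image]
  simp only [norm_sub_rev z_d, and_iff_right hu]

theorem integral_inner_B_adjState [CompleteSpace E] (hU : IsUnitaryGroup U)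
    (hB : (B : E →ₗ[ℂ] E).IsSymmetric) {z_d : E} {u v : ℝ → E} (hv : v ∈ UadmSet M τ T) :
    ∫ t in Ioo τ T, inner ℂ (B (adjState U B y₀ z_d T τ u t)) (v t) =
      inner ℂ (z_d - stateT U B T τ u y₀) (stateT U B T τ v y₀ - U T y₀) := by
  rw [stateT_sub_free_evolution, ← integral_inner (integrableOn_controlIntegrand hU hv)]
  refine integral_congr_ae (ae_of_all _ fun t => (hB _ _).trans ?_)
  rw [adjState, hU.inner_apply_left, neg_sub]
  rfl

end Control

theorem op_maximum_principle_general
    (U : ℝ → H →L[ℂ] H) (B : H →L[ℂ] H) (hU : IsUnitaryGroup U) (hB : IsOrthProj B)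
    (T : ℝ) (y₀ z_d : H)
    (τ M : ℝ)
    (u : ℝ → H) :
    IsOptOP U B y₀ z_d T M τ u ↔
      u ∈ UadmSet M τ T ∧ ∀ v : ℝ → H, v ∈ UadmSet M τ T →
        (∫ t in Ioo τ T, (inner ℂ (B (adjState U B y₀ z_d T τ u t)) (v t) : ℂ)).re ≤
          (∫ t in Ioo τ T, (inner ℂ (B (adjState U B y₀ z_d T τ u t)) (u t) : ℂ)).re := by
  have hopt (hu : u ∈ UadmSet M τ T) : IsOptOP U B y₀ z_d T M τ u ↔ ∀ v ∈ UadmSet M τ T,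
      (∫ t in Ioo τ T, inner ℂ (B (adjState U B y₀ z_d T τ u t)) (v t)).re ≤
        (∫ t in Ioo τ T, inner ℂ (B (adjState U B y₀ z_d T τ u t)) (u t)).re := by
    rw [isOptOP_iff_isMinOn_reachableSet hu,
      (convex_reachableSet hU).isMinOn_norm_sub_iff_re_inner_le_zero (mem_image_of_mem _ hu),
      reachableSet, forall_mem_image]
    refine forall₂_congr fun v hv => ?_
    rw [integral_inner_B_adjState hU hB.2.2 hv, integral_inner_B_adjState hU hB.2.2 hu,
      ← sub_add_sub_cancel (stateT U B T τ v y₀) (stateT U B T τ u y₀) (U T y₀),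
      inner_add_right, Complex.add_re, add_le_iff_nonpos_left]
  exact ⟨fun h => ⟨h.1, (hopt h.1).1 h⟩, fun h => (hopt h.1).2 h.2⟩

theorem op_maximum_principle
    (U : ℝ → H →L[ℂ] H) (B : H →L[ℂ] H) (hU : IsUnitaryGroup U) (hB : IsOrthProj B)
    (hEC : EC U B) (hECrev : EC (fun t => U (-t)) B)
    (T : ℝ) (hT : 0 < T) (y₀ z_d : H) (hrT : 0 < ‖U T y₀ - z_d‖)
    (τ M : ℝ) (hτ : τ ∈ Ico (0 : ℝ) T) (hM : 0 ≤ M) (hMlt : M < Mtau U B y₀ z_d T τ)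
    (u : ℝ → H) :
    IsOptOP U B y₀ z_d T M τ u ↔
      u ∈ UadmSet M τ T ∧ ∀ v : ℝ → H, v ∈ UadmSet M τ T →
        (∫ t in Ioo τ T, (inner ℂ (B (adjState U B y₀ z_d T τ u t)) (v t) : ℂ)).re ≤
          (∫ t in Ioo τ T, (inner ℂ (B (adjState U B y₀ z_d T τ u t)) (u t) : ℂ)).re :=
  op_maximum_principle_general U B hU hB T y₀ z_d τ M u
end
end

section
/- Assume hypothesis (EC). Let τ ∈ [0,T) and r ≥ 0. Then the optimal norm problem (NP)^{τ,r} has an optimal control, and M(τ,r) ≤ M^τ; moreover, if r < r_T then M(τ,r) > 0. -/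
open MeasureTheory Set Filter Topology

/-! Consider the controls whose final state lies in `B(z_d, r)` and whose norm on `(τ, T)` is at
most `M(τ, r) + 1/(n+1)`. As a subset of `L²((τ, T); H)` this is, for each `n`, a nonempty bounded
closed convex set, and the sets decrease with `n`. In a Hilbert space such a sequence has a common
point: near-minimal-norm points of the sets form a Cauchy sequence by the parallelogram law. Any
common point is an optimal control. (EC) makes the admissible set nonempty and gives a control
steering exactly to `z_d`, so `M(τ, r) ≤ M^τ`. Since `U` is unitary and `B` is a projection, a
control of norm `M` on `(τ, T)` moves the final state by at most `M (T - τ)`; hence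
`r_T ≤ r + M(τ, r) (T - τ)`, so `M(τ, r) > 0` when `r < r_T`. -/

theorem nonempty_iInter_of_antitone_convex {𝕜 E : Type*} [RCLike 𝕜] [NormedAddCommGroup E]
    [InnerProductSpace 𝕜 E] [NormedSpace ℝ E] [CompleteSpace E] {S : ℕ → Set E}
    (hS : Antitone S) (hne : ∀ n, (S n).Nonempty) (hconv : ∀ n, Convex ℝ (S n))
    (hclosed : ∀ n, IsClosed (S n)) (hbdd : Bornology.IsBounded (S 0)) :
    (⋂ n, S n).Nonempty := by
  obtain ⟨R, hR⟩ := hbdd.exists_norm_le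
  set d : ℕ → ℝ := fun n => sInf (norm '' S n)
  have hd_le : ∀ n, ∀ x ∈ S n, d n ≤ ‖x‖ := fun n x hx =>
    csInf_le ⟨0, by rintro _ ⟨y, -, rfl⟩; exact norm_nonneg y⟩ ⟨x, hx, rfl⟩
  have hd_nonneg : ∀ n, 0 ≤ d n := fun n =>
    le_csInf ((hne n).image _) (by rintro _ ⟨y, -, rfl⟩; exact norm_nonneg y)
  have hd_mono : Monotone d := fun n m hnm =>
    le_csInf ((hne m).image _) (by rintro _ ⟨x, hx, rfl⟩; exact hd_le n x (hS hnm hx))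
  have hd_bdd : BddAbove (range d) := ⟨R, forall_mem_range.2 fun n =>
    let ⟨x, hx⟩ := hne n; (hd_le n x hx).trans (hR x (hS (Nat.zero_le n) hx))⟩
  set D := ⨆ n, d n
  have hd_D : ∀ n, d n ≤ D := le_ciSup hd_bdd
  set ε : ℕ → ℝ := fun n => 1 / ((n : ℝ) + 1)
  have hε_anti : Antitone ε := fun n m hnm => Nat.one_div_le_one_div hnm
  have hx : ∀ n, ∃ x ∈ S n, ‖x‖ < d n + ε n := fun n => by
    obtain ⟨_, ⟨x, hx, rfl⟩, hlt⟩ :=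
      exists_lt_of_csInf_lt ((hne n).image _) (lt_add_of_pos_right (d n) Nat.one_div_pos_of_nat)
    exact ⟨x, hx, hlt⟩
  choose x hxS hx using hx
  -- the midpoint of `x n` and `x m` lies in `S n`, so `‖x n + x m‖ ≥ 2 d n`; conclude by the
  -- parallelogram law
  have hdist : ∀ n m, n ≤ m → ‖x n - x m‖ ^ 2 ≤ 4 * ((D + ε n) ^ 2 - d n ^ 2) := by
    intro n m hnm
    have hmid : 2 * d n ≤ ‖x n + x m‖ := by
      have := hd_le n _ (hconv n (hxS n) (hS hnm (hxS m)) (by norm_num : (0 : ℝ) ≤ 1 / 2)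
        (by norm_num : (0 : ℝ) ≤ 1 / 2) (by norm_num))
      rw [← smul_add, norm_smul, Real.norm_of_nonneg (by norm_num)] at this
      linarith
    have hpar := parallelogram_law_with_norm 𝕜 (x n) (x m)
    have hxn : ‖x n‖ ≤ D + ε n := (hx n).le.trans (by linarith [hd_D n])
    have hxm : ‖x m‖ ≤ D + ε n := (hx m).le.trans (by linarith [hd_D m, hε_anti hnm])
    nlinarith [norm_nonneg (x n), norm_nonneg (x m), hd_nonneg n]
  have hcauchy : CauchySeq x := by
    refine cauchySeq_of_le_tendsto_0 (fun N => √(4 * ((D + ε N) ^ 2 - d N ^ 2)))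
      (fun n m N hn hm => ?_) ?_
    · wlog hnm : n ≤ m generalizing n m
      · rw [dist_comm]; exact this m n hm hn (le_of_not_ge hnm)
      refine dist_eq_norm (x n) (x m) ▸ Real.le_sqrt_of_sq_le ((hdist n m hnm).trans ?_)
      have hD : 0 ≤ D + ε n := add_nonneg ((hd_nonneg 0).trans (hd_D 0)) Nat.one_div_pos_of_nat.le
      have h1 := pow_le_pow_left₀ hD (add_le_add_right (hε_anti hn) D) 2
      have h2 := pow_le_pow_left₀ (hd_nonneg N) (hd_mono hn) 2
      linarith
    · have hlim : Tendsto d atTop (𝓝 D) := tendsto_atTop_ciSup hd_mono hd_bdd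
      have := ((((tendsto_one_div_add_atTop_nhds_zero_nat.const_add D).pow 2).sub
        (hlim.pow 2)).const_mul 4).sqrt
      simpa [ε] using this
  obtain ⟨y, hy⟩ := cauchySeq_tendsto_of_complete hcauchy
  exact ⟨y, mem_iInter.2 fun n => (hclosed n).mem_of_tendsto hy
    ((eventually_ge_atTop n).mono fun m hm => hS hm (hxS m))⟩

section Operators

variable {H : Type*} [NormedAddCommGroup H] [InnerProductSpace ℂ H]

theorem IsOrthProj.norm_apply_le {B : H →L[ℂ] H} (hB : IsOrthProj B) (x : H) :
    ‖B x‖ ≤ ‖x‖ := by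
  obtain ⟨-, hidem, hsymm⟩ := hB
  have : ‖B x‖ ^ 2 ≤ ‖x‖ * ‖B x‖ :=
    calc ‖B x‖ ^ 2 = RCLike.re (inner ℂ (B x) (B x)) := (inner_self_eq_norm_sq _).symm
      _ = RCLike.re (inner ℂ x (B x)) := by
        rw [hsymm, ← ContinuousLinearMap.comp_apply, hidem]
      _ ≤ ‖x‖ * ‖B x‖ := (RCLike.re_le_norm _).trans (norm_inner_le_norm _ _)
  nlinarith [norm_nonneg (B x), norm_nonneg x]

variable {U : ℝ → H →L[ℂ] H}

theorem IsUnitaryGroup.apply_add (hU : IsUnitaryGroup U) (s t : ℝ) (x : H) :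
    U (s + t) x = U s (U t x) := by
  rw [hU.2.1]; rfl

theorem IsUnitaryGroup.continuous_uncurry_s9 (hU : IsUnitaryGroup U) :
    Continuous fun p : ℝ × H => U p.1 p.2 := by
  refine continuous_iff_continuousAt.2 fun ⟨t₀, x₀⟩ => ?_
  have hle : ∀ p : ℝ × H, ‖U p.1 p.2 - U t₀ x₀‖ ≤ ‖p.2 - x₀‖ + ‖U p.1 x₀ - U t₀ x₀‖ :=
    fun ⟨t, x⟩ => by
      calc ‖U t x - U t₀ x₀‖ = ‖U t (x - x₀) + (U t x₀ - U t₀ x₀)‖ := by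
            rw [map_sub, sub_add_sub_cancel]
        _ ≤ _ := by rw [← hU.2.2.1 t (x - x₀)]; exact norm_add_le _ _
  have hlim : Tendsto (fun p : ℝ × H => ‖p.2 - x₀‖ + ‖U p.1 x₀ - U t₀ x₀‖) (𝓝 (t₀, x₀)) (𝓝 0) :=
    ((continuous_snd.sub continuous_const).norm.add
      (((hU.2.2.2 x₀).comp continuous_fst).sub continuous_const).norm).tendsto' _ _ (by simp)
  exact tendsto_iff_norm_sub_tendsto_zero.2 (squeeze_zero (fun _ => norm_nonneg _) hle hlim)

end Operators

section ControlIntegral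

variable {H : Type*} [NormedAddCommGroup H] [InnerProductSpace ℂ H]
  {U : ℝ → H →L[ℂ] H} {B : H →L[ℂ] H} {T : ℝ} {μ : Measure ℝ} {v w : ℝ → H} {c : ℝ}

noncomputable def controlIntegral (U : ℝ → H →L[ℂ] H) (B : H →L[ℂ] H) (T : ℝ) (μ : Measure ℝ)
    (v : ℝ → H) : H :=
  ∫ s, U (T - s) (B (v s)) ∂μ

theorem stateT_eq_add_controlIntegral (U : ℝ → H →L[ℂ] H) (B : H →L[ℂ] H) (T τ : ℝ)
    (u : ℝ → H) (y₀ : H) :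
    stateT U B T τ u y₀ = U T y₀ + controlIntegral U B T (volume.restrict (Ioo τ T)) u :=
  rfl

theorem norm_controlIntegrand_le (hU : IsUnitaryGroup U) (hB : IsOrthProj B) (s : ℝ) (x : H) :
    ‖U (T - s) (B x)‖ ≤ ‖x‖ :=
  (hU.2.2.1 _ _).trans_le (hB.norm_apply_le x)

theorem aestronglyMeasurable_controlIntegrand (hU : IsUnitaryGroup U)
    (hv : AEStronglyMeasurable v μ) :
    AEStronglyMeasurable (fun s => U (T - s) (B (v s))) μ :=
  hU.continuous_uncurry_s9.comp_aestronglyMeasurable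
    ((continuous_const.sub continuous_id).aestronglyMeasurable.prodMk
      (B.continuous.comp_aestronglyMeasurable hv))

theorem integrable_controlIntegrand [IsFiniteMeasure μ] (hU : IsUnitaryGroup U)
    (hB : IsOrthProj B) (hv : AEStronglyMeasurable v μ) (hc : ∀ᵐ s ∂μ, ‖v s‖ ≤ c) :
    Integrable (fun s => U (T - s) (B (v s))) μ :=
  (integrable_const c).mono' (aestronglyMeasurable_controlIntegrand hU hv)
    (hc.mono fun s hs => (norm_controlIntegrand_le hU hB s _).trans hs)

theorem norm_controlIntegral_le [IsFiniteMeasure μ] (hU : IsUnitaryGroup U) (hB : IsOrthProj B)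
    (hc : ∀ᵐ s ∂μ, ‖v s‖ ≤ c) : ‖controlIntegral U B T μ v‖ ≤ c * μ.real univ :=
  norm_integral_le_of_norm_le_const
    (hc.mono fun s hs => (norm_controlIntegrand_le hU hB s _).trans hs)

theorem controlIntegral_congr_ae (h : v =ᵐ[μ] w) :
    controlIntegral U B T μ v = controlIntegral U B T μ w :=
  integral_congr_ae (h.mono fun s hs => by simp only [hs])

theorem controlIntegral_smul (a : ℝ) (v : ℝ → H) :
    controlIntegral U B T μ (a • v) = a • controlIntegral U B T μ v := by
  simp only [controlIntegral, Pi.smul_apply, ContinuousLinearMap.map_smul_of_tower, integral_smul]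

theorem controlIntegral_add (hv : Integrable (fun s => U (T - s) (B (v s))) μ)
    (hw : Integrable (fun s => U (T - s) (B (w s))) μ) :
    controlIntegral U B T μ (v + w) = controlIntegral U B T μ v + controlIntegral U B T μ w := by
  simp only [controlIntegral, Pi.add_apply, map_add, integral_add hv hw]

theorem tendsto_controlIntegral [IsFiniteMeasure μ] (hU : IsUnitaryGroup U) (hB : IsOrthProj B)
    {v : ℕ → ℝ → H} (hv : ∀ n, AEStronglyMeasurable (v n) μ) (hc : ∀ n, ∀ᵐ s ∂μ, ‖v n s‖ ≤ c)
    (hlim : ∀ᵐ s ∂μ, Tendsto (fun n => v n s) atTop (𝓝 (w s))) :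
    Tendsto (fun n => controlIntegral U B T μ (v n)) atTop (𝓝 (controlIntegral U B T μ w)) :=
  tendsto_integral_of_dominated_convergence (fun _ => c)
    (fun n => aestronglyMeasurable_controlIntegrand hU (hv n)) (integrable_const c)
    (fun n => (hc n).mono fun s hs => (norm_controlIntegrand_le hU hB s _).trans hs)
    (hlim.mono fun s hs => ((U (T - s)).continuous.comp B.continuous).continuousAt.tendsto.comp hs)

end ControlIntegral

section SupNorm

variable {H : Type*} [NormedAddCommGroup H] {u : ℝ → H} {a b c : ℝ}

theorem supNorm_nonneg (u : ℝ → H) (a b : ℝ) : 0 ≤ supNorm u a b :=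
  Real.sInf_nonneg fun _ hc => hc.1

theorem supNorm_le (hc : 0 ≤ c) (h : ∀ᵐ t, t ∈ Ioo a b → ‖u t‖ ≤ c) : supNorm u a b ≤ c :=
  csInf_le ⟨0, fun _ hc => hc.1⟩ ⟨hc, h⟩

theorem MemLinfty.mono {a' b' : ℝ} (hu : MemLinfty u a b) (ha : a ≤ a') (hb : b' ≤ b) :
    MemLinfty u a' b' :=
  let ⟨hmeas, c, hc⟩ := hu
  ⟨hmeas, c, hc.mono fun _ ht hmem => ht (Ioo_subset_Ioo ha hb hmem)⟩

theorem MemLinfty.ae_norm_le_of_supNorm_lt (hu : MemLinfty u a b) (h : supNorm u a b < c) :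
    ∀ᵐ t, t ∈ Ioo a b → ‖u t‖ ≤ c := by
  obtain ⟨-, c₀, hc₀⟩ := hu
  have hne : {c | 0 ≤ c ∧ ∀ᵐ t, t ∈ Ioo a b → ‖u t‖ ≤ c}.Nonempty :=
    ⟨max c₀ 0, le_max_right _ _, hc₀.mono fun _ ht hmem => (ht hmem).trans (le_max_left _ _)⟩
  obtain ⟨c', ⟨-, hc'⟩, hlt⟩ := exists_lt_of_csInf_lt hne h
  exact hc'.mono fun _ ht hmem => (ht hmem).trans hlt.le

end SupNorm

section Controls

variable {H : Type*} [NormedAddCommGroup H] [InnerProductSpace ℂ H]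
  {U : ℝ → H →L[ℂ] H} {B : H →L[ℂ] H} {u : ℝ → H} {T τ : ℝ}

theorem stateT_congr {v : ℝ → H} (y₀ : H) (h : EqOn u v (Ioo τ T)) :
    stateT U B T τ u y₀ = stateT U B T τ v y₀ := by
  unfold stateT
  congr 1
  exact setIntegral_congr_fun measurableSet_Ioo fun s hs => by simp only [h hs]

theorem IsUnitaryGroup.stateT_comp_sub (hU : IsUnitaryGroup U) (hτT : τ ≤ T) (u : ℝ → H)
    (y₀ : H) : stateT U B T τ (fun s => u (s - τ)) y₀ = stateT U B (T - τ) 0 u (U τ y₀) := by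
  have hsub : (0 : ℝ) ≤ T - τ := sub_nonneg.2 hτT
  simp only [stateT, ← hU.apply_add, sub_add_cancel, ← integral_Ioc_eq_integral_Ioo,
    ← intervalIntegral.integral_of_le hτT, ← intervalIntegral.integral_of_le hsub]
  congr 1
  simpa only [sub_self, sub_sub_sub_cancel_right] using
    intervalIntegral.integral_comp_sub_right (fun s => U (T - τ - s) (B (u s))) τ (a := τ) (b := T)

theorem EC.exists_control (hU : IsUnitaryGroup U) (hEC : EC U B) (hτT : τ < T) (y₀ z : H) :
    ∃ u : ℝ → H, MemLinfty u 0 T ∧ stateT U B T τ u y₀ = z := by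
  obtain ⟨C, -, hC⟩ := hEC (T - τ) (sub_pos.2 hτT)
  obtain ⟨u₀, hmeas, hbound, hreach⟩ := hC (U τ y₀) z
  have hshift := (measurePreserving_sub_right volume τ).quasiMeasurePreserving
  refine ⟨(Ioo τ T).indicator fun s => u₀ (s - τ), ⟨?_, ?_⟩, ?_⟩
  · exact (hmeas.comp_quasiMeasurePreserving hshift).indicator measurableSet_Ioo
  · refine ⟨max (C * ‖z - U (T - τ) (U τ y₀)‖) 0, ?_⟩
    filter_upwards [hshift.ae hbound] with t ht _
    by_cases hmem : t ∈ Ioo τ T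
    · rw [indicator_of_mem hmem]
      exact (ht ⟨sub_pos.2 hmem.1, sub_lt_sub_right hmem.2 τ⟩).trans (le_max_left _ _)
    · simp [indicator_of_notMem hmem]
  · rw [stateT_congr y₀ fun s hs => indicator_of_mem hs _, hU.stateT_comp_sub hτT.le, hreach]

end Controls

section L2

variable {H : Type*} [NormedAddCommGroup H] [InnerProductSpace ℂ H]
  {U : ℝ → H →L[ℂ] H} {B : H →L[ℂ] H} {T : ℝ} {μ : Measure ℝ} {y₀ : H} {c : ℝ} {Z : Set H}

def admissibleL2 (U : ℝ → H →L[ℂ] H) (B : H →L[ℂ] H) (T : ℝ) (μ : Measure ℝ) (y₀ : H) (c : ℝ)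
    (Z : Set H) : Set (Lp H 2 μ) :=
  {f | (∀ᵐ s ∂μ, ‖f s‖ ≤ c) ∧ U T y₀ + controlIntegral U B T μ f ∈ Z}

theorem admissibleL2_mono {c' : ℝ} (hcc' : c ≤ c') :
    admissibleL2 U B T μ y₀ c Z ⊆ admissibleL2 U B T μ y₀ c' Z :=
  fun _ hf => ⟨hf.1.mono fun _ hs => hs.trans hcc', hf.2⟩

theorem iInter_admissibleL2_subset :
    ⋂ n : ℕ, admissibleL2 U B T μ y₀ (c + 1 / ((n : ℝ) + 1)) Z ⊆ admissibleL2 U B T μ y₀ c Z := by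
  intro f hf
  rw [mem_iInter] at hf
  refine ⟨?_, (hf 0).2⟩
  filter_upwards [ae_all_iff.2 fun n => (hf n).1] with s hs
  refine le_of_forall_pos_le_add fun ε hε => ?_
  obtain ⟨n, hn⟩ := exists_nat_one_div_lt hε
  linarith [hs n]

variable [IsFiniteMeasure μ]

theorem isBounded_admissibleL2 (hc : 0 ≤ c) : Bornology.IsBounded (admissibleL2 U B T μ y₀ c Z) :=
  isBounded_iff_forall_norm_le.2 ⟨_, fun _ hf => Lp.norm_le_of_ae_bound hc hf.1⟩

theorem convex_admissibleL2 (hU : IsUnitaryGroup U) (hB : IsOrthProj B) (hZ : Convex ℝ Z) :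
    Convex ℝ (admissibleL2 U B T μ y₀ c Z) := by
  intro f hf g hg a b ha hb hab
  have hcoe : ⇑(a • f + b • g) =ᵐ[μ] a • ⇑f + b • ⇑g := by
    filter_upwards [Lp.coeFn_add (a • f) (b • g), Lp.coeFn_smul a f, Lp.coeFn_smul b g]
      with s h₁ h₂ h₃
    simp only [h₁, Pi.add_apply, h₂, h₃, Pi.smul_apply]
  have hint : ∀ h ∈ admissibleL2 U B T μ y₀ c Z, ∀ a : ℝ,
      Integrable (fun s => U (T - s) (B ((a • ⇑h) s))) μ := fun h hh a => by
    simpa only [Pi.smul_apply, ContinuousLinearMap.map_smul_of_tower, Pi.smul_def] using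
      (integrable_controlIntegrand hU hB (Lp.aestronglyMeasurable h) hh.1).smul a
  refine ⟨?_, ?_⟩
  · filter_upwards [hcoe, hf.1, hg.1] with s hs hfs hgs
    rw [hs, ← mem_closedBall_zero_iff]
    exact convex_closedBall 0 c (mem_closedBall_zero_iff.2 hfs) (mem_closedBall_zero_iff.2 hgs)
      ha hb hab
  · rw [controlIntegral_congr_ae hcoe, controlIntegral_add (hint f hf a) (hint g hg b),
      controlIntegral_smul, controlIntegral_smul]
    convert hZ hf.2 hg.2 ha hb hab using 1
    obtain rfl : b = 1 - a := by linarith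
    module

theorem isClosed_admissibleL2 (hU : IsUnitaryGroup U) (hB : IsOrthProj B) (hZ : IsClosed Z) :
    IsClosed (admissibleL2 U B T μ y₀ c Z) := by
  refine IsSeqClosed.isClosed fun {f} {g} hf hlim => ?_
  -- `L²` convergence gives a.e. convergence along a subsequence, and then dominated convergence
  obtain ⟨ns, -, hae⟩ := (tendstoInMeasure_of_tendsto_Lp hlim).exists_seq_tendsto_ae
  have hbound : ∀ n, ∀ᵐ s ∂μ, ‖f (ns n) s‖ ≤ c := fun n => (hf (ns n)).1
  refine ⟨?_, hZ.mem_of_tendsto (tendsto_const_nhds.add (tendsto_controlIntegral hU hB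
    (fun n => Lp.aestronglyMeasurable _) hbound hae)) (Eventually.of_forall fun n => (hf _).2)⟩
  filter_upwards [ae_all_iff.2 hbound, hae] with s hs hlim
  exact le_of_tendsto' hlim.norm hs

end L2

section NormOptimal

variable {H : Type*} [NormedAddCommGroup H] [InnerProductSpace ℂ H]
  {U : ℝ → H →L[ℂ] H} {B : H →L[ℂ] H} {y₀ z_d : H} {u : ℝ → H} {c r T τ : ℝ} {Z : Set H}

theorem admissibleL2_nonempty_of_stateT_mem (hu : AEStronglyMeasurable u volume)
    (hc : ∀ᵐ t, t ∈ Ioo τ T → ‖u t‖ ≤ c) (hZ : stateT U B T τ u y₀ ∈ Z) :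
    (admissibleL2 U B T (volume.restrict (Ioo τ T)) y₀ c Z).Nonempty := by
  have hcμ : ∀ᵐ s ∂volume.restrict (Ioo τ T), ‖u s‖ ≤ c :=
    (ae_restrict_iff' measurableSet_Ioo).2 hc
  have hmem : MemLp u 2 (volume.restrict (Ioo τ T)) := MemLp.of_bound hu.restrict c hcμ
  refine ⟨hmem.toLp u, ?_, ?_⟩
  · filter_upwards [hmem.coeFn_toLp, hcμ] with s hs hcs
    rwa [hs]
  · rwa [controlIntegral_congr_ae hmem.coeFn_toLp]

theorem exists_stateT_mem_of_mem_admissibleL2 {f : Lp H 2 (volume.restrict (Ioo τ T))}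
    (hf : f ∈ admissibleL2 U B T (volume.restrict (Ioo τ T)) y₀ c Z) :
    ∃ u : ℝ → H, MemLinfty u 0 T ∧ (∀ᵐ t, t ∈ Ioo τ T → ‖u t‖ ≤ c) ∧
      stateT U B T τ u y₀ ∈ Z := by
  have hc : ∀ᵐ t, t ∈ Ioo τ T → ‖f t‖ ≤ c := (ae_restrict_iff' measurableSet_Ioo).1 hf.1
  have hmeas : AEStronglyMeasurable ((Ioo τ T).indicator f) volume :=
    (aestronglyMeasurable_indicator_iff measurableSet_Ioo).2 (Lp.aestronglyMeasurable f)
  refine ⟨(Ioo τ T).indicator f, ⟨hmeas, max c 0, ?_⟩, ?_, ?_⟩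
  · filter_upwards [hc] with t ht _
    by_cases hmem : t ∈ Ioo τ T
    · rw [indicator_of_mem hmem]
      exact (ht hmem).trans (le_max_left _ _)
    · simp [indicator_of_notMem hmem]
  · filter_upwards [hc] with t ht hmem
    rw [indicator_of_mem hmem]
    exact ht hmem
  · rw [stateT_congr y₀ fun s hs => indicator_of_mem hs _]
    exact hf.2

theorem norm_stateT_sub_le (hU : IsUnitaryGroup U) (hB : IsOrthProj B) (hτT : τ ≤ T)
    (hc : ∀ᵐ t, t ∈ Ioo τ T → ‖u t‖ ≤ c) : ‖stateT U B T τ u y₀ - U T y₀‖ ≤ c * (T - τ) := by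
  rw [stateT_eq_add_controlIntegral, add_sub_cancel_left, ← Real.volume_real_Ioo_of_le hτT,
    ← measureReal_restrict_apply_univ]
  exact norm_controlIntegral_le hU hB ((ae_restrict_iff' measurableSet_Ioo).2 hc)

theorem MNP_nonneg : 0 ≤ MNP U B y₀ z_d T τ r :=
  Real.sInf_nonneg (by rintro _ ⟨v, -, rfl⟩; exact supNorm_nonneg v τ T)

theorem MNP_le_supNorm (hu : u ∈ WadmSet U B y₀ z_d T τ r) :
    MNP U B y₀ z_d T τ r ≤ supNorm u τ T :=
  csInf_le ⟨0, by rintro _ ⟨v, -, rfl⟩; exact supNorm_nonneg v τ T⟩ ⟨u, hu, rfl⟩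

theorem exists_supNorm_lt_of_MNP_lt (hW : (WadmSet U B y₀ z_d T τ r).Nonempty)
    (h : MNP U B y₀ z_d T τ r < c) : ∃ u ∈ WadmSet U B y₀ z_d T τ r, supNorm u τ T < c :=
  let ⟨_, ⟨u, hu, rfl⟩, hlt⟩ := exists_lt_of_csInf_lt (hW.image _) h
  ⟨u, hu, hlt⟩

theorem MNP_le_Mtau (hreach : ∃ u, MemLinfty u 0 T ∧ stateT U B T τ u y₀ = z_d) (hr : 0 ≤ r) :
    MNP U B y₀ z_d T τ r ≤ Mtau U B y₀ z_d T τ :=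
  csInf_le_csInf ⟨0, by rintro _ ⟨v, -, rfl⟩; exact supNorm_nonneg v τ T⟩
    (let ⟨u, hu⟩ := hreach; ⟨_, u, hu, rfl⟩)
    (image_mono fun v hv => ⟨hv.1, by rwa [hv.2, sub_self, norm_zero]⟩)

theorem exists_norm_optimal_control [CompleteSpace H] (hU : IsUnitaryGroup U) (hB : IsOrthProj B)
    (hEC : EC U B) (hτ : τ ∈ Ico 0 T) (hr : 0 ≤ r) :
    ∃ u ∈ WadmSet U B y₀ z_d T τ r, ∀ᵐ t, t ∈ Ioo τ T → ‖u t‖ ≤ MNP U B y₀ z_d T τ r := by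
  set M := MNP U B y₀ z_d T τ r
  have hW : (WadmSet U B y₀ z_d T τ r).Nonempty :=
    let ⟨u, hu, hreach⟩ := hEC.exists_control hU hτ.2 y₀ z_d
    ⟨u, hu, by rwa [hreach, sub_self, norm_zero]⟩
  have hne : ∀ n : ℕ, (admissibleL2 U B T (volume.restrict (Ioo τ T)) y₀ (M + 1 / ((n : ℝ) + 1))
      (Metric.closedBall z_d r)).Nonempty := fun n => by
    obtain ⟨u, ⟨hu, hres⟩, hlt⟩ :=
      exists_supNorm_lt_of_MNP_lt hW (lt_add_of_pos_right M Nat.one_div_pos_of_nat)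
    exact admissibleL2_nonempty_of_stateT_mem hu.1
      ((hu.mono hτ.1 le_rfl).ae_norm_le_of_supNorm_lt hlt) (mem_closedBall_iff_norm.2 hres)
  obtain ⟨f, hf⟩ := nonempty_iInter_of_antitone_convex (𝕜 := ℂ)
    (fun n m hnm => admissibleL2_mono (add_le_add_right (Nat.one_div_le_one_div hnm) M)) hne
    (fun n => convex_admissibleL2 hU hB (convex_closedBall z_d r))
    (fun n => isClosed_admissibleL2 hU hB Metric.isClosed_closedBall)
    (isBounded_admissibleL2 (add_nonneg MNP_nonneg Nat.one_div_pos_of_nat.le))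
  obtain ⟨u, hu, hbound, hres⟩ :=
    exists_stateT_mem_of_mem_admissibleL2 (iInter_admissibleL2_subset hf)
  exact ⟨u, ⟨hu, mem_closedBall_iff_norm.1 hres⟩, hbound⟩

end NormOptimal

variable {H : Type*} [NormedAddCommGroup H] [InnerProductSpace ℂ H] [CompleteSpace H]
  [SecondCountableTopology H]

theorem np_has_optimal_control_general
    (U : ℝ → H →L[ℂ] H) (B : H →L[ℂ] H) (hU : IsUnitaryGroup U) (hB : IsOrthProj B)
    (hEC : EC U B)
    (T : ℝ) (y₀ z_d : H)
    (τ r : ℝ) (hτ : τ ∈ Ico (0 : ℝ) T) (hr : 0 ≤ r) :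
    (∃ u : ℝ → H, u ∈ WadmSet U B y₀ z_d T τ r ∧ supNorm u τ T = MNP U B y₀ z_d T τ r) ∧
    MNP U B y₀ z_d T τ r ≤ Mtau U B y₀ z_d T τ ∧
    (r < ‖U T y₀ - z_d‖ → 0 < MNP U B y₀ z_d T τ r) := by
  obtain ⟨u, hu, hbound⟩ := exists_norm_optimal_control (y₀ := y₀) (z_d := z_d) hU hB hEC hτ hr
  refine ⟨⟨u, hu, (supNorm_le MNP_nonneg hbound).antisymm (MNP_le_supNorm hu)⟩,
    MNP_le_Mtau (hEC.exists_control hU hτ.2 y₀ z_d) hr, fun hlt => ?_⟩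
  have htriangle := norm_sub_le_norm_sub_add_norm_sub (U T y₀) (stateT U B T τ u y₀) z_d
  have hmove := norm_stateT_sub_le hU hB hτ.2.le hbound (y₀ := y₀)
  rw [norm_sub_rev] at hmove
  exact pos_of_mul_pos_left (by linarith [hu.2]) (sub_nonneg.2 hτ.2.le)

theorem np_has_optimal_control
    (U : ℝ → H →L[ℂ] H) (B : H →L[ℂ] H) (hU : IsUnitaryGroup U) (hB : IsOrthProj B)
    (hEC : EC U B) (hECrev : EC (fun t => U (-t)) B)
    (T : ℝ) (hT : 0 < T) (y₀ z_d : H) (hrT : 0 < ‖U T y₀ - z_d‖)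
    (τ r : ℝ) (hτ : τ ∈ Ico (0 : ℝ) T) (hr : 0 ≤ r) :
    (∃ u : ℝ → H, u ∈ WadmSet U B y₀ z_d T τ r ∧ supNorm u τ T = MNP U B y₀ z_d T τ r) ∧
    MNP U B y₀ z_d T τ r ≤ Mtau U B y₀ z_d T τ ∧
    (r < ‖U T y₀ - z_d‖ → 0 < MNP U B y₀ z_d T τ r) :=
  np_has_optimal_control_general U B hU hB hEC T y₀ z_d τ r hτ hr
end
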